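/- Let T ∈ ℝ^{k×k} be a row-stochastic noise transition matrix (T_{ij} ≥ 0 and Σ_j T_{ij} = 1 for every i) satisfying the diagonally-dominant condition T_{ii} > max{max_{j≠i} T_{ij}, max_{j≠i} T_{ji}} for every i. Suppose, as in the class-conditional noise model, that the softmax output of the classifier on a sample with clean class c is the row vector (T_{c1}, ..., T_{ck}). Then for any observed label ỹ and any class c ≠ ỹ, the clean sample (whose clean class equals ỹ) has strictly smaller Jensen-Shannon divergence to the observed label than the noisy sample (whose clean class is c): JSD((T_{ỹ1},...,T_{ỹk}), δ_ỹ) < JSD((T_{c1},...,T_{ck}), δ_ỹ). -/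

import Mathlib

open Finset

/-- Jensen-Shannon divergence between two probability vectors on `Fin k`.
Terms with `P j = 0` (resp. `Q j = 0`) vanish since they are multiplied by `0`. -/
noncomputable def JSD {k : ℕ} (P Q : Fin k → ℝ) : ℝ :=
  (1 / 2) * ∑ j, P j * Real.log (P j / ((P j + Q j) / 2)) +
  (1 / 2) * ∑ j, Q j * Real.log (Q j / ((P j + Q j) / 2))

/-- The one-hot probability vector at class `y`. -/
def oneHot {k : ℕ} (y : Fin k) : Fin k → ℝ := fun j => if j = y then 1 else 0

/-!
Against a one-hot target `δ_y`, each coordinate `j ≠ y` of `P` contributes exactly `P j · log 2`,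
so `JSD(P, δ_y) = log 2 + φ(P y) / 2` with `φ(p) = p log p - (1 + p) log (1 + p)`. As
`φ'(p) = log p - log (1 + p) < 0`, the divergence decreases strictly in the mass `P y`, and
diagonal dominance gives `T c ỹ < T ỹ ỹ`.
-/

open Real

lemma strictAntiOn_mul_log_sub_one_add_mul_log :
    StrictAntiOn (fun p : ℝ => p * log p - (1 + p) * log (1 + p)) (Set.Ici 0) := by
  refine strictAntiOn_of_hasDerivWithinAt_neg (convex_Ici 0)
    (f' := fun p => log p - log (1 + p)) ?_ (fun p hp => ?_) (fun p hp => ?_)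
  · exact (continuous_mul_log.sub (continuous_mul_log.comp (continuous_const_add 1))).continuousOn
  · rw [interior_Ici, Set.mem_Ioi] at hp
    have h : HasDerivAt (fun q => q * log q - (1 + q) * log (1 + q))
        (log p + 1 - (log (1 + p) + 1) * 1) p :=
      (hasDerivAt_mul_log hp.ne').sub
        ((hasDerivAt_mul_log (by positivity : 1 + p ≠ 0)).comp p ((hasDerivAt_id p).const_add 1))
    exact (h.congr_deriv (by ring)).hasDerivWithinAt
  · rw [interior_Ici, Set.mem_Ioi] at hp
    exact sub_neg.2 (log_lt_log hp (lt_one_add p))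

lemma mul_log_div_half_self (x : ℝ) : x * log (x / (x / 2)) = x * log 2 := by
  rcases eq_or_ne x 0 with rfl | hx
  · simp
  · rw [div_div_cancel₀ hx]

lemma mul_log_div_half_add_one {x : ℝ} (hx : 0 ≤ x) :
    x * log (x / ((x + 1) / 2)) = x * (log 2 + log x - log (1 + x)) := by
  rcases hx.eq_or_lt with rfl | hpos
  · simp
  · rw [div_div_eq_mul_div, log_div (by positivity) (by positivity), log_mul hpos.ne' two_ne_zero,
      add_comm x 1]
    ring

lemma JSD_oneHot {k : ℕ} {P : Fin k → ℝ} (hP : ∑ j, P j = 1) {y : Fin k} (hy : 0 ≤ P y) :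
    JSD P (oneHot y) = log 2 + (P y * log (P y) - (1 + P y) * log (1 + P y)) / 2 := by
  have hP_compl : ∑ j ∈ {y}ᶜ, P j = 1 - P y := by
    rw [← hP, Fintype.sum_eq_add_sum_compl y P, add_sub_cancel_left]
  have hclean : ∑ j, P j * log (P j / ((P j + oneHot y j) / 2)) =
      P y * (log 2 + log (P y) - log (1 + P y)) + (1 - P y) * log 2 := by
    rw [Fintype.sum_eq_add_sum_compl y, ← hP_compl, sum_mul]
    congr 1
    · simpa [oneHot] using mul_log_div_half_add_one hy
    · refine sum_congr rfl fun j hj => ?_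
      rw [oneHot, if_neg (by simpa using hj), add_zero, mul_log_div_half_self]
  have hnoisy : ∑ j, oneHot y j * log (oneHot y j / ((P j + oneHot y j) / 2)) =
      log 2 - log (1 + P y) := by
    rw [Fintype.sum_eq_single y (fun j hj => by simp [oneHot, hj]), oneHot, if_pos rfl, one_div_div, add_comm, log_div two_ne_zero (by positivity), one_mul]
  rw [JSD, hclean, hnoisy]
  ring

/-- If the row-stochastic noise transition matrix `T` is diagonally dominant
(`T i i > max {max_{j ≠ i} T i j, max_{j ≠ i} T j i}` for all `i`) and the softmax output
on a sample with clean class `c` is the row `T c`, then for any observed label `ytil` and any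
clean class `c ≠ ytil`, the clean sample has strictly smaller JSD to the observed label:
`JSD (T ytil) δ_ytil < JSD (T c) δ_ytil`. -/
theorem jsd_clean_lt_noisy_of_diagonally_dominant {k : ℕ}
    (T : Fin k → Fin k → ℝ)
    (hT0 : ∀ i j, 0 ≤ T i j) (hT1 : ∀ i, ∑ j, T i j = 1)
    (hdom : ∀ i j, j ≠ i → T i j < T i i ∧ T j i < T i i)
    (ytil c : Fin k) (hc : c ≠ ytil) :
    JSD (T ytil) (oneHot ytil) < JSD (T c) (oneHot ytil) := by
  rw [JSD_oneHot (hT1 ytil) (hT0 ytil ytil), JSD_oneHot (hT1 c) (hT0 c ytil)]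
  have hanti := strictAntiOn_mul_log_sub_one_add_mul_log (hT0 c ytil) (hT0 ytil ytil)
    (hdom ytil c hc).2
  dsimp only at hanti
  linarith
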